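/- The covariance of tempered fractional Brownian motion is asymptotically stationary: for fixed t > 0 and α > 1/2, λ > 0, the quantity Ĉ_{α,λ}(t, t+τ) = C_{α,λ}(τ) − C_{α,λ}(t+τ) − C_{α,λ}(t) + C_{α,λ}(0) converges to C_{α,λ}(0) − C_{α,λ}(t) as τ → ∞. -/
import Mathlib


open Real Filter MeasureTheory

/-- Modified Bessel function of the second kind, via its integral representation. -/
noncomputable def besselK (ν x : ℝ) : ℝ :=
  ∫ t in Set.Ioi (0 : ℝ), Real.exp (-x * Real.cosh t) * Real.cosh (ν * t)

/-- Covariance of the Weyl fractional Ornstein-Uhlenbeck process. -/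
noncomputable def fouCov (α lam τ : ℝ) : ℝ :=
  if τ = 0 then Real.Gamma (2*α - 1) / (Real.Gamma α ^ 2 * (2*lam) ^ (2*α - 1))
  else (1 / (Real.sqrt π * Real.Gamma α)) * (|τ| / (2*lam)) ^ (α - 1/2) *
    besselK (α - 1/2) (lam * |τ|)


lemma coshQuad (t : ℝ) (ht : 0 ≤ t) : 1 + t^2/8 ≤ Real.cosh t := by
  have h1 : t/2 + 1 ≤ Real.exp (t/2) := Real.add_one_le_exp _
  have h2 : (-t) + 1 ≤ Real.exp (-t) := Real.add_one_le_exp _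
  have h3 : Real.exp (t/2) * Real.exp (t/2) = Real.exp t := by
    rw [← Real.exp_add]; ring_nf
  rw [Real.cosh_eq]
  nlinarith [sq_nonneg (t/2)]

lemma besselIntegrand_integrable (ν : ℝ) :
    IntegrableOn (fun t => Real.exp (-Real.cosh t) * Real.cosh (ν * t)) (Set.Ioi 0) := by
  have hint : Integrable (fun t : ℝ =>
      Real.exp (2 * ν^2) * Real.exp (-(1/8) * (t - 4 * |ν|)^2)) := by
    exact ((integrable_exp_neg_mul_sq (by norm_num : (0:ℝ) < 1/8)).comp_sub_right
      (4 * |ν|)).const_mul _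
  refine Integrable.mono' hint.integrableOn ?_ ?_
  · exact (((Real.continuous_exp.comp continuous_cosh.neg).mul
      (Real.continuous_cosh.comp (continuous_const.mul continuous_id))).aestronglyMeasurable).restrict
  · refine (ae_restrict_iff' measurableSet_Ioi).2 (Filter.Eventually.of_forall fun t ht => ?_)
    have ht0 : (0:ℝ) ≤ t := (le_of_lt ht)
    have hc : 1 + t^2/8 ≤ Real.cosh t := coshQuad t ht0
    have hch : Real.cosh (ν * t) ≤ Real.exp (|ν| * t) := by
      rw [Real.cosh_eq]
      have e1 : Real.exp (ν * t) ≤ Real.exp (|ν| * t) :=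
        Real.exp_le_exp.2 (mul_le_mul_of_nonneg_right (le_abs_self ν) ht0)
      have e2 : Real.exp (-(ν * t)) ≤ Real.exp (|ν| * t) :=
        Real.exp_le_exp.2 (by nlinarith [neg_abs_le ν])
      linarith
    have hpos : 0 ≤ Real.exp (-Real.cosh t) * Real.cosh (ν * t) :=
      mul_nonneg (Real.exp_pos _).le (Real.cosh_pos _).le
    rw [Real.norm_of_nonneg hpos]
    calc Real.exp (-Real.cosh t) * Real.cosh (ν * t)
        ≤ Real.exp (-(1 + t^2/8)) * Real.exp (|ν| * t) := by
          apply mul_le_mul (Real.exp_le_exp.2 (by linarith)) hch (Real.cosh_pos _).le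
            (Real.exp_pos _).le
      _ = Real.exp (-(1 + t^2/8) + |ν| * t) := (Real.exp_add _ _).symm
      _ ≤ Real.exp (2 * ν^2) * Real.exp (-(1/8) * (t - 4 * |ν|)^2) := by
          rw [← Real.exp_add]
          apply Real.exp_le_exp.2
          have : |ν|^2 = ν^2 := sq_abs ν
          nlinarith

lemma besselK_nonneg (ν x : ℝ) : 0 ≤ besselK ν x :=
  setIntegral_nonneg measurableSet_Ioi fun t _ =>
    mul_nonneg (Real.exp_pos _).le (Real.cosh_pos _).le

lemma besselK_le (ν x : ℝ) (hx : 1 ≤ x) :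
    besselK ν x ≤ Real.exp (1 - x) * besselK ν 1 := by
  rw [besselK, besselK, ← MeasureTheory.integral_const_mul]
  simp only [neg_one_mul]
  refine integral_mono_of_nonneg
    (Filter.Eventually.of_forall fun t => mul_nonneg (Real.exp_pos _).le (Real.cosh_pos _).le)
    ((besselIntegrand_integrable ν).const_mul _)
    ?_
  refine (ae_restrict_iff' measurableSet_Ioi).2 (Filter.Eventually.of_forall fun t _ => ?_)
  have h1 : (1:ℝ) ≤ Real.cosh t := Real.one_le_cosh t
  have hle : -x * Real.cosh t ≤ (1 - x) + (-Real.cosh t) := by nlinarith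
  calc Real.exp (-x * Real.cosh t) * Real.cosh (ν * t)
      ≤ (Real.exp (1 - x) * Real.exp (-Real.cosh t)) * Real.cosh (ν * t) := by
        rw [← Real.exp_add]
        exact mul_le_mul_of_nonneg_right (Real.exp_le_exp.2 hle) (Real.cosh_pos _).le
    _ = Real.exp (1 - x) * (Real.exp (-Real.cosh t) * Real.cosh (ν * t)) := by ring

lemma fouCov_tendsto (α lam : ℝ) (hα : 1/2 < α) (hlam : 0 < lam) :
    Tendsto (fun τ : ℝ => fouCov α lam τ) atTop (nhds 0) := by
  set s := α - 1/2 with hs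
  set c0 := 1 / (Real.sqrt π * Real.Gamma α) with hc0
  have hΓ : 0 < Real.Gamma α := Real.Gamma_pos_of_pos (by linarith)
  have hc0pos : 0 < c0 := by positivity
  set K1 := besselK s 1 with hK1
  set C := c0 / (2*lam) ^ s * Real.exp 1 * K1 with hC
  have hg : Tendsto (fun x : ℝ => C * (x ^ s * Real.exp (-lam * x))) atTop (nhds (C * 0)) :=
    (tendsto_rpow_mul_exp_neg_mul_atTop_nhds_zero s lam hlam).const_mul C
  rw [mul_zero] at hg
  apply squeeze_zero' ?_ ?_ hg
  · filter_upwards [eventually_gt_atTop 0] with x hx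
    rw [fouCov, if_neg hx.ne']
    exact mul_nonneg (mul_nonneg hc0pos.le (Real.rpow_nonneg (by positivity) _))
      (besselK_nonneg _ _)
  · filter_upwards [eventually_gt_atTop 0, eventually_ge_atTop (1/lam)] with x hx hx2
    have hlx : 1 ≤ lam * x := by
      rw [div_le_iff₀ hlam] at hx2; linarith [hx2]
    rw [fouCov, if_neg hx.ne', abs_of_pos hx]
    calc c0 * (x / (2*lam)) ^ s * besselK s (lam * x)
        ≤ c0 * (x / (2*lam)) ^ s * (Real.exp (1 - lam * x) * K1) := by
          apply mul_le_mul_of_nonneg_left (besselK_le s _ hlx)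
          exact mul_nonneg hc0pos.le (Real.rpow_nonneg (by positivity) _)
      _ = C * (x ^ s * Real.exp (-lam * x)) := by
          rw [hC, Real.div_rpow hx.le (by positivity), Real.exp_sub]
          rw [show -lam * x = -(lam*x) by ring, Real.exp_neg]
          field_simp

theorem stmt8 (α lam t : ℝ) (hα : 1/2 < α) (hlam : 0 < lam) (ht : 0 < t) :
    Tendsto (fun τ : ℝ =>
        fouCov α lam τ - fouCov α lam (t + τ) - fouCov α lam t + fouCov α lam 0)
      atTop (nhds (fouCov α lam 0 - fouCov α lam t)) := by
  have h1 := fouCov_tendsto α lam hα hlam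
  have h2 : Tendsto (fun τ : ℝ => fouCov α lam (t + τ)) atTop (nhds 0) :=
    h1.comp (tendsto_atTop_add_const_left _ t tendsto_id)
  have := ((h1.sub h2).sub (tendsto_const_nhds (x := fouCov α lam t))).add
    (tendsto_const_nhds (x := fouCov α lam 0))
  simpa [sub_eq_add_neg, add_comm, add_left_comm] using this
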